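/- arXiv:2505.12915 — 2 statements merged into one kernel-verified Lean document; each statement's English description precedes it below -/
import Mathlib

section
/- The algebra A = K⟨x,y⟩/(x², xy + y² + y²x) over a field K of characteristic 0 has K-vector space dimension 6. -/
/-!
Multiplying the relation `xy + y² + y²x = 0` on either side by `x` and `y` and using `x² = 0`
gives `xyx = xy + y²`, `y²x = -(xy + y²)` and `xy² = yxy = y³ = 0`, so the words
`1, x, y, xy, yx, y²` span `A`. They are linearly independent because the six-dimensional
representation by left multiplication on these words, which satisfies the relations, sends them
to the standard basis vectors when applied to the image of `1`.
-/

universe u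

noncomputable section

/-- The generator `x` of the free algebra `K⟨x,y⟩`. -/
def Xg (K : Type u) [Field K] : FreeAlgebra K (Fin 2) := FreeAlgebra.ι K 0

/-- The generator `y` of the free algebra `K⟨x,y⟩`. -/
def Yg (K : Type u) [Field K] : FreeAlgebra K (Fin 2) := FreeAlgebra.ι K 1

/-- The relations `x² = 0` and `xy + y² + y²x = 0`. -/
inductive ARel (K : Type u) [Field K] :
    FreeAlgebra K (Fin 2) → FreeAlgebra K (Fin 2) → Prop
  | sq : ARel K (Xg K * Xg K) 0
  | mix : ARel K (Xg K * Yg K + Yg K * Yg K + Yg K * Yg K * Xg K) 0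

/-- The algebra `A = K⟨x,y⟩/(x², xy + y² + y²x)`, the quotient of the free associative
algebra on `x, y` by the two-sided ideal generated by `x²` and `xy + y² + y²x`. -/
def AlgA (K : Type u) [Field K] : Type u := RingQuot (ARel K)

instance (K : Type u) [Field K] : Ring (AlgA K) :=
  inferInstanceAs (Ring (RingQuot (ARel K)))

instance (K : Type u) [Field K] : Algebra K (AlgA K) :=
  inferInstanceAs (Algebra K (RingQuot (ARel K)))


structure IsARel {R : Type*} [Ring R] (a b : R) : Prop where
  sq : a * a = 0
  mix : a * b + b * b + b * b * a = 0

namespace IsARel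

variable {R : Type*} [Ring R] {a b : R}

theorem bba_eq (h : IsARel a b) : b * b * a = -(a * b + b * b) :=
  eq_neg_of_add_eq_zero_right h.mix

theorem aba_eq (h : IsARel a b) : a * b * a = a * b + b * b := by
  rw [← sub_eq_zero]
  calc a * b * a - (a * b + b * b)
      = (a * b + b * b + b * b * a) * a - b * b * (a * a) - (a * b + b * b + b * b * a) := by
        noncomm_ring
    _ = 0 := by simp [h.sq, h.mix]

theorem abb_eq_zero (h : IsARel a b) : a * b * b = 0 := by
  have habba : a * b * b * a = -(a * b * b) := by
    calc a * b * b * a = a * (b * b * a) := by noncomm_ring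
      _ = -((a * a) * b + a * b * b) := by rw [h.bba_eq]; noncomm_ring
      _ = -(a * b * b) := by rw [h.sq, zero_mul, zero_add]
  calc a * b * b = -(a * b * b * a) := by rw [habba, neg_neg]
    _ = -(a * b * b) * a := by rw [neg_mul]
    _ = a * b * b * a * a := by rw [habba]
    _ = 0 := by rw [mul_assoc _ a a, h.sq, mul_zero]

theorem abab_eq (h : IsARel a b) : a * b * a * b = b * b * b := by
  rw [h.aba_eq, add_mul, h.abb_eq_zero, zero_add]

theorem bab_eq (h : IsARel a b) : b * a * b = -(b * b * b + b * b * b) := by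
  -- expand `b³a` once as `(ab)(aba)` and once as `b(b²a)`
  have h₁ : b * b * b * a = b * b * b :=
    calc b * b * b * a = a * b * (a * b * a) := by rw [← h.abab_eq]; noncomm_ring
      _ = a * b * (a * b + b * b) := by rw [h.aba_eq]
      _ = a * b * a * b + a * b * b * b := by noncomm_ring
      _ = b * b * b := by rw [h.abab_eq, h.abb_eq_zero, zero_mul, add_zero]
  have h₂ : b * b * b * a = -(b * a * b + b * b * b) :=
    calc b * b * b * a = b * (b * b * a) := by noncomm_ring
      _ = -(b * a * b + b * b * b) := by rw [h.bba_eq]; noncomm_ring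
  rw [h₁] at h₂
  linear_combination (norm := abel) h₂

theorem bbbb_eq_zero (h : IsARel a b) : b * b * b * b = 0 :=
  calc b * b * b * b = a * b * (a * b * b) := by rw [← h.abab_eq]; noncomm_ring
    _ = 0 := by rw [h.abb_eq_zero, mul_zero]

theorem bbb_eq_zero (h : IsARel a b) : b * b * b = 0 :=
  calc b * b * b = -(b * b * a * b) := by
        rw [h.bba_eq, neg_mul, neg_neg, add_mul, h.abb_eq_zero, zero_add]
    _ = -(b * (b * a * b)) := by noncomm_ring
    _ = b * b * b * b + b * b * b * b := by rw [h.bab_eq]; noncomm_ring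
    _ = 0 := by rw [h.bbbb_eq_zero, add_zero]

theorem bab_eq_zero (h : IsARel a b) : b * a * b = 0 := by
  rw [h.bab_eq, h.bbb_eq_zero, add_zero, neg_zero]

end IsARel

theorem Submodule.eq_top_of_one_mem_of_ι_mul_mem {R X A : Type*} [CommSemiring R] [Semiring A]
    [Algebra R A] {f : FreeAlgebra R X →ₐ[R] A} (hf : Function.Surjective f) {S : Submodule R A}
    (h1 : 1 ∈ S) (hS : ∀ i, ∀ m ∈ S, f (FreeAlgebra.ι R i) * m ∈ S) : S = ⊤ := by
  have hmul : ∀ p, ∀ m ∈ S, f p * m ∈ S := by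
    intro p
    induction p using FreeAlgebra.induction with
    | grade0 r =>
      intro m hm
      rw [AlgHom.commutes, ← Algebra.smul_def]
      exact S.smul_mem r hm
    | grade1 i => exact hS i
    | mul p q hp hq =>
      intro m hm
      rw [map_mul, mul_assoc]
      exact hp _ (hq m hm)
    | add p q hp hq =>
      intro m hm
      rw [map_add, add_mul]
      exact S.add_mem (hp m hm) (hq m hm)
  refine eq_top_iff.mpr fun z _ => ?_
  obtain ⟨p, rfl⟩ := hf z
  simpa using hmul p 1 h1

theorem Submodule.mul_mem_span_of_mul_mem {R A ι : Type*} [CommSemiring R] [Semiring A]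
    [Algebra R A] {v : ι → A} {a : A} (h : ∀ j, a * v j ∈ span R (Set.range v)) :
    ∀ m ∈ span R (Set.range v), a * m ∈ span R (Set.range v) :=
  span_le (p := (span R (Set.range v)).comap (LinearMap.mulLeft R a)) |>.mpr
    (Set.forall_mem_range.mpr h)

namespace AlgA

variable (K : Type u) [Field K]

def mk : FreeAlgebra K (Fin 2) →ₐ[K] AlgA K := RingQuot.mkAlgHom K (ARel K)

theorem mk_surjective : Function.Surjective (mk K) := RingQuot.mkAlgHom_surjective K (ARel K)

theorem mk_eq_mk_of_rel {p q : FreeAlgebra K (Fin 2)} (h : ARel K p q) : mk K p = mk K q :=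
  RingQuot.mkAlgHom_rel K h

def x : AlgA K := mk K (Xg K)

def y : AlgA K := mk K (Yg K)

theorem isARel_x_y : IsARel (x K) (y K) where
  sq := by simpa only [x, map_mul, map_zero] using mk_eq_mk_of_rel K ARel.sq
  mix := by
    simpa only [x, y, map_add, map_mul, map_zero] using mk_eq_mk_of_rel K ARel.mix

section Lift

variable {B : Type*} [Ring B] [Algebra K B] {a b : B}

def lift (h : IsARel a b) : AlgA K →ₐ[K] B :=
  RingQuot.liftAlgHom K ⟨FreeAlgebra.lift K ![a, b], fun p q hpq => by
    cases hpq <;> simp [Xg, Yg, h.sq, h.mix]⟩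

@[simp] theorem lift_x (h : IsARel a b) : lift K h (x K) = a :=
  (RingQuot.liftAlgHom_mkAlgHom_apply _ _ _ _).trans (FreeAlgebra.lift_ι_apply _ _)

@[simp] theorem lift_y (h : IsARel a b) : lift K h (y K) = b :=
  (RingQuot.liftAlgHom_mkAlgHom_apply _ _ _ _).trans (FreeAlgebra.lift_ι_apply _ _)

end Lift

def normalWords : Fin 6 → AlgA K := ![1, x K, y K, x K * y K, y K * x K, y K * y K]

theorem span_normalWords : Submodule.span K (Set.range (normalWords K)) = ⊤ := by
  have h := isARel_x_y K
  set S := Submodule.span K (Set.range (normalWords K))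
  have mem (j : Fin 6) : normalWords K j ∈ S := Submodule.subset_span ⟨j, rfl⟩
  have hx : ∀ j, x K * normalWords K j ∈ S := by
    simp only [Fin.forall_fin_succ, IsEmpty.forall_iff, and_true, normalWords,
      Matrix.cons_val_zero, Matrix.cons_val_succ, ← mul_assoc, mul_one, h.sq, h.aba_eq,
      h.abb_eq_zero, zero_mul, Submodule.zero_mem, true_and]
    exact ⟨mem 1, mem 3, S.add_mem (mem 3) (mem 5)⟩
  have hy : ∀ j, y K * normalWords K j ∈ S := by
    simp only [Fin.forall_fin_succ, IsEmpty.forall_iff, and_true, normalWords,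
      Matrix.cons_val_zero, Matrix.cons_val_succ, ← mul_assoc, mul_one, h.bba_eq,
      h.bab_eq_zero, h.bbb_eq_zero, Submodule.zero_mem, true_and]
    exact ⟨mem 2, mem 4, mem 5, S.neg_mem (S.add_mem (mem 3) (mem 5))⟩
  exact Submodule.eq_top_of_one_mem_of_ι_mul_mem (mk_surjective K) (mem 0) <|
    Fin.forall_fin_two.mpr
      ⟨Submodule.mul_mem_span_of_mul_mem hx, Submodule.mul_mem_span_of_mul_mem hy⟩

/- Column `j` holds the coordinates of `x` (resp. `y`) times the `j`-th normal word, so these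
matrices realise left multiplication on `A`, with `1` as the cyclic vector `Pi.single 0 1`. -/
def xMatrix : Matrix (Fin 6) (Fin 6) K :=
  !![0, 0, 0, 0, 0, 0;
     1, 0, 0, 0, 0, 0;
     0, 0, 0, 0, 0, 0;
     0, 0, 1, 0, 1, 0;
     0, 0, 0, 0, 0, 0;
     0, 0, 0, 0, 1, 0]

def yMatrix : Matrix (Fin 6) (Fin 6) K :=
  !![0, 0, 0, 0, 0, 0;
     0, 0, 0, 0, 0, 0;
     1, 0, 0, 0, 0, 0;
     0, 0, 0, 0, -1, 0;
     0, 1, 0, 0, 0, 0;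
     0, 0, 1, 0, -1, 0]

theorem isARel_xMatrix_yMatrix : IsARel (xMatrix K) (yMatrix K) := by
  constructor
  · simp [xMatrix, Matrix.cons_mul, Matrix.vecMul_cons]
    ext i j; fin_cases i <;> fin_cases j <;> rfl
  · simp [xMatrix, yMatrix, Matrix.cons_mul, Matrix.vecMul_cons]
    ext i j; fin_cases i <;> fin_cases j <;> rfl

open Matrix in
theorem linearIndependent_normalWords : LinearIndependent K (normalWords K) := by
  let ρ := lift K (isARel_xMatrix_yMatrix K)
  let orbit : AlgA K →ₗ[K] (Fin 6 → K) :=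
    (mulVecBilin K K).flip (Pi.single 0 1) ∘ₗ ρ.toLinearMap
  have col_x0 : xMatrix K *ᵥ Pi.single 0 1 = Pi.single 1 1 := by
    rw [mulVec_single_one]; ext i; fin_cases i <;> rfl
  have col_y0 : yMatrix K *ᵥ Pi.single 0 1 = Pi.single 2 1 := by
    rw [mulVec_single_one]; ext i; fin_cases i <;> rfl
  have col_x2 : xMatrix K *ᵥ Pi.single 2 1 = Pi.single 3 1 := by
    rw [mulVec_single_one]; ext i; fin_cases i <;> rfl
  have col_y1 : yMatrix K *ᵥ Pi.single 1 1 = Pi.single 4 1 := by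
    rw [mulVec_single_one]; ext i; fin_cases i <;> rfl
  have col_y2 : yMatrix K *ᵥ Pi.single 2 1 = Pi.single 5 1 := by
    rw [mulVec_single_one]; ext i; fin_cases i <;> rfl
  refine LinearIndependent.of_comp orbit ?_
  convert Pi.linearIndependent_single_one (Fin 6) K with i
  fin_cases i <;> simp [orbit, ρ, normalWords, col_x0, col_y0, col_x2, col_y1, col_y2]

end AlgA

theorem stmt_2_general (K : Type u) [Field K] :
    Module.finrank K (AlgA K) = 6 := by
  rw [Module.finrank_eq_card_basis
    (Module.Basis.mk (AlgA.linearIndependent_normalWords K) (AlgA.span_normalWords K).ge),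
    Fintype.card_fin]

/-- The algebra `A = K⟨x,y⟩/(x², xy + y² + y²x)` over a field `K` of characteristic 0
has `K`-vector space dimension 6. -/
theorem stmt_2 (K : Type u) [Field K] [CharZero K] :
    Module.finrank K (AlgA K) = 6 :=
  stmt_2_general K

end
end

section
/- The algebra A = K⟨x,y⟩/(x², xy + y² + y²x) over a field K of characteristic 0 is a local ring, and its quotient by its Jacobson radical is isomorphic to K as a K-algebra. -/
universe u

noncomputable section

/-- The Jacobson radical of `A` as a two-sided ideal. -/
def jacRad (K : Type u) [Field K] : TwoSidedIdeal (AlgA K) :=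
  TwoSidedIdeal.jacobson (⊥ : TwoSidedIdeal (AlgA K))

/-! The augmentation `ε : A → K`, `x, y ↦ 0`, has nil kernel. Give the words
`1, x, y, yx, xy, y², yxy, y³` the depths `0, 1, 1, 2, 3, 3, 4, 5` and let `F k` be the span of
the words of depth `≥ k`. Using `x² = 0` and the consequences `xy² = 0`, `x(yx) = xy + y²`,
`y⁴ = 0` of the relations, left multiplication by `x` or `y` maps `F k` into `F (k + 1)`; hence
so does every element of `ker ε`, and since `1 ∈ F 0` and `F 6 = 0`, its sixth power vanishes.
With a nil kernel, `a` is a unit iff `ε a ≠ 0`, so `ker ε` is the unique maximal left ideal of `A`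
and of `Aᵐᵒᵖ`, hence it is the Jacobson radical, and `ε` identifies `A / ker ε` with `K`. -/

section Filtration

variable {K R : Type*} [CommSemiring K] [Semiring R] [Algebra K R]

def raisingSubalgebra (F : ℕ → Submodule K R) (hF : Antitone F) : NonUnitalSubalgebra K R where
  carrier := {a | ∀ k, ∀ b ∈ F k, a * b ∈ F (k + 1)}
  add_mem' ha hb k b hbk := by rw [add_mul]; exact add_mem (ha k b hbk) (hb k b hbk)
  zero_mem' k b _ := by rw [zero_mul]; exact zero_mem _
  mul_mem' ha hb k b hbk := by rw [mul_assoc]; exact hF (k + 1).le_succ (ha _ _ (hb k b hbk))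
  smul_mem' c a ha k b hbk := by rw [smul_mul_assoc]; exact Submodule.smul_mem _ c (ha k b hbk)

variable {F : ℕ → Submodule K R} {hF : Antitone F} {a : R}

theorem pow_mul_mem_of_mem_raisingSubalgebra (ha : a ∈ raisingSubalgebra F hF) (n : ℕ) {k : ℕ}
    {b : R} (hb : b ∈ F k) : a ^ n * b ∈ F (k + n) := by
  induction n with
  | zero => simpa using hb
  | succ n ih => rw [pow_succ', mul_assoc]; exact ha _ _ ih

theorem pow_eq_zero_of_mem_raisingSubalgebra (h1 : (1 : R) ∈ F 0) {N : ℕ} (hN : F N = ⊥)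
    (ha : a ∈ raisingSubalgebra F hF) : a ^ N = 0 := by
  simpa [hN] using pow_mul_mem_of_mem_raisingSubalgebra ha N h1

variable (K) {ι : Type*} (w : ι → R) (d : ι → ℕ)

def spanFiltration (k : ℕ) : Submodule K R := Submodule.span K (w '' {i | k ≤ d i})

theorem spanFiltration_antitone : Antitone (spanFiltration K w d) :=
  fun _ _ hkl ↦ Submodule.span_mono (Set.image_mono fun _ hi ↦ hkl.trans hi)

theorem mem_spanFiltration {i : ι} {k : ℕ} (hi : k ≤ d i) : w i ∈ spanFiltration K w d k :=
  Submodule.subset_span ⟨i, hi, rfl⟩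

variable {K w d}

theorem mem_raisingSubalgebra_spanFiltration
    (h : ∀ i, a * w i ∈ spanFiltration K w d (d i + 1)) :
    a ∈ raisingSubalgebra (spanFiltration K w d) (spanFiltration_antitone K w d) := by
  intro k b hb
  have hle :
      spanFiltration K w d k ≤ (spanFiltration K w d (k + 1)).comap (LinearMap.mulLeft K a) :=
    Submodule.span_le.2 fun _ ⟨i, hi, hb⟩ ↦
      hb ▸ spanFiltration_antitone K w d (Nat.succ_le_succ hi) (h i)
  exact hle hb

end Filtration

section Augmentation

variable {K R : Type*} [CommRing K] [Ring R] [Algebra K R] (ε : R →ₐ[K] K)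

theorem sub_algebraMap_mem_of_adjoin_eq_top {s : Set R} (hs : Algebra.adjoin K s = ⊤)
    {S : NonUnitalSubalgebra K R} (h : ∀ a ∈ s, a - algebraMap K R (ε a) ∈ S) (a : R) :
    a - algebraMap K R (ε a) ∈ S := by
  induction (hs ▸ Algebra.mem_top : a ∈ Algebra.adjoin K s) using Algebra.adjoin_induction with
  | mem a ha => exact h a ha
  | algebraMap r => simp
  | add a b _ _ ha hb => simpa [add_sub_add_comm] using add_mem ha hb
  | mul a b _ _ ha hb =>
    have key : a * b - algebraMap K R (ε (a * b)) =
        (a - algebraMap K R (ε a)) * (b - algebraMap K R (ε b)) +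
          ε a • (b - algebraMap K R (ε b)) + ε b • (a - algebraMap K R (ε a)) := by
      simp only [map_mul, Algebra.smul_def, mul_sub, sub_mul]
      rw [Algebra.commutes (ε b) (algebraMap K R (ε a)), Algebra.commutes (ε b) a]
      abel
    rw [key]
    exact add_mem (add_mem (mul_mem ha hb) (SMulMemClass.smul_mem _ hb))
      (SMulMemClass.smul_mem _ ha)

end Augmentation

theorem Ideal.isMaximal_iff_eq_of_isUnit_of_notMem {S : Type*} [Ring S] {M : Ideal S}
    (hM : M ≠ ⊤) (h : ∀ a ∉ M, IsUnit a) {J : Ideal S} : J.IsMaximal ↔ J = M := by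
  have hJM (J : Ideal S) (hJ : J ≠ ⊤) : J ≤ M := fun a ha ↦
    not_not.1 fun haM ↦ hJ (J.eq_top_of_isUnit_mem ha (h a haM))
  refine ⟨fun hJ ↦ hJ.eq_of_le hM (hJM J hJ.ne_top), ?_⟩
  rintro rfl
  refine ⟨⟨hM, fun J hMJ ↦ ?_⟩⟩
  by_contra hJ
  exact hMJ.not_ge (hJM J hJ)

section NilAugmentation

variable {K R : Type*} [Field K] [Ring R] [Algebra K R] {ε : R →ₐ[K] K}

theorem isUnit_iff_map_ne_zero_of_isNilpotent (hε : ∀ a, ε a = 0 → IsNilpotent a) {a : R} :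
    IsUnit a ↔ ε a ≠ 0 := by
  refine ⟨fun ha ↦ (ha.map ε).ne_zero, fun ha ↦ ?_⟩
  set m := (ε a)⁻¹ • (a - algebraMap K R (ε a))
  have hm : IsNilpotent m := hε m (by simp [m])
  have : a = algebraMap K R (ε a) * (1 + m) := by
    rw [mul_add, mul_one, ← Algebra.smul_def, smul_smul, mul_inv_cancel₀ ha, one_smul]
    abel
  rw [this]
  exact ((isUnit_iff_ne_zero.2 ha).map _).mul hm.isUnit_one_add

theorem isMaximal_iff_eq_ker_of_isNilpotent (hε : ∀ a, ε a = 0 → IsNilpotent a)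
    {J : Ideal R} : J.IsMaximal ↔ J = RingHom.ker ε :=
  Ideal.isMaximal_iff_eq_of_isUnit_of_notMem (RingHom.ker_ne_top ε) fun _ ha ↦
    (isUnit_iff_map_ne_zero_of_isNilpotent hε).2 ha

theorem existsUnique_isMaximal_mulOpposite (hε : ∀ a, ε a = 0 → IsNilpotent a) :
    ∃! I : Ideal Rᵐᵒᵖ, I.IsMaximal := by
  let εop := ε.fromOpposite fun _ _ ↦ Commute.all _ _
  have key {J : Ideal Rᵐᵒᵖ} : J.IsMaximal ↔ J = RingHom.ker εop :=
    Ideal.isMaximal_iff_eq_of_isUnit_of_notMem (RingHom.ker_ne_top εop) fun a ha ↦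
      isUnit_unop.1 ((isUnit_iff_map_ne_zero_of_isNilpotent hε).2 ha)
  exact ⟨_, key.2 rfl, fun _ ↦ key.1⟩

theorem TwoSidedIdeal.jacobson_bot_eq_ker (hε : ∀ a, ε a = 0 → IsNilpotent a) :
    (⊥ : TwoSidedIdeal R).jacobson = TwoSidedIdeal.ker ε := by
  have hjac : (TwoSidedIdeal.asIdeal ⊥).jacobson = RingHom.ker ε := by
    rw [Ideal.jacobson, ← sInf_singleton (a := RingHom.ker ε)]
    congr 1
    ext J
    simp [isMaximal_iff_eq_ker_of_isNilpotent hε]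
  ext a
  rw [← TwoSidedIdeal.mem_asIdeal, TwoSidedIdeal.asIdeal_jacobson, hjac, RingHom.mem_ker,
    TwoSidedIdeal.mem_ker]

end NilAugmentation

def TwoSidedIdeal.quotientKerAlgEquivOfSurjective {K R S : Type*} [CommSemiring K] [Ring R]
    [Ring S] [Algebra K R] [Algebra K S] {f : R →ₐ[K] S} (hf : Function.Surjective f) :
    (TwoSidedIdeal.ker f).ringCon.Quotient ≃ₐ[K] S :=
  AlgEquiv.ofBijective (RingCon.kerLiftₐ f) ⟨RingCon.kerLiftₐ_injective f, fun s ↦ by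
    obtain ⟨r, rfl⟩ := hf s
    exact ⟨r, rfl⟩⟩

namespace AlgA

variable (K : Type u) [Field K]

local notation "𝐱" => x K
local notation "𝐲" => y K

theorem x_mul_x : 𝐱 * 𝐱 = 0 := by
  have h := RingQuot.mkAlgHom_rel K (ARel.sq (K := K))
  rw [map_mul, map_zero] at h
  exact h

theorem x_mul_y_add_y_mul_y_add_y_mul_y_mul_x : 𝐱 * 𝐲 + 𝐲 * 𝐲 + 𝐲 * 𝐲 * 𝐱 = 0 := by
  have h := RingQuot.mkAlgHom_rel K (ARel.mix (K := K))
  simp only [map_add, map_mul, map_zero] at h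
  exact h

theorem y_mul_y_mul_x : 𝐲 * (𝐲 * 𝐱) = -(𝐱 * 𝐲) - 𝐲 * 𝐲 := by
  rw [← mul_assoc, ← sub_eq_zero, ← x_mul_y_add_y_mul_y_add_y_mul_y_mul_x K]
  abel

theorem x_mul_y_mul_x : 𝐱 * (𝐲 * 𝐱) = 𝐱 * 𝐲 + 𝐲 * 𝐲 := by
  have h := congrArg (· * 𝐱) (x_mul_y_add_y_mul_y_add_y_mul_y_mul_x K)
  simp only [add_mul, mul_assoc, x_mul_x, mul_zero, add_zero, zero_mul] at h
  rw [← neg_neg (𝐱 * 𝐲 + 𝐲 * 𝐲), neg_add', ← y_mul_y_mul_x, ← eq_neg_iff_add_eq_zero.2 h]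

-- `𝐱 (𝐲𝐲) (1 + 𝐱) = 0` by multiplying the relation by `𝐱` on the left, and `1 + 𝐱` is a unit
theorem x_mul_y_mul_y : 𝐱 * (𝐲 * 𝐲) = 0 := by
  have h := congrArg (𝐱 * ·) (x_mul_y_add_y_mul_y_add_y_mul_y_mul_x K)
  simp only [mul_add, ← mul_assoc, x_mul_x, zero_mul, zero_add, mul_zero] at h
  have hu : IsUnit (1 + 𝐱) := IsNilpotent.isUnit_one_add ⟨2, by rw [sq, x_mul_x]⟩
  rw [← hu.mul_left_eq_zero, mul_add, mul_one, ← mul_assoc, h]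

theorem x_mul_y_mul_y_mul (t : AlgA K) : 𝐱 * (𝐲 * (𝐲 * t)) = 0 := by
  rw [← mul_assoc, ← mul_assoc, mul_assoc 𝐱, x_mul_y_mul_y, zero_mul]

theorem y_mul_y_mul_y_mul_y : 𝐲 * (𝐲 * (𝐲 * 𝐲)) = 0 :=
  calc 𝐲 * (𝐲 * (𝐲 * 𝐲))
      = (𝐱 * 𝐲 + 𝐲 * 𝐲) * (𝐲 * 𝐲) - 𝐱 * (𝐲 * (𝐲 * 𝐲)) := by noncomm_ring
    _ = 𝐱 * 𝐲 * (𝐱 * (𝐲 * 𝐲)) := by rw [← x_mul_y_mul_x, x_mul_y_mul_y_mul]; noncomm_ring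
    _ = 0 := by rw [x_mul_y_mul_y, mul_zero]

theorem x_mul_y_mul_x_mul_y : 𝐱 * (𝐲 * (𝐱 * 𝐲)) = 𝐲 * (𝐲 * 𝐲) := by
  rw [← mul_assoc 𝐲, ← mul_assoc, x_mul_y_mul_x, add_mul, mul_assoc, x_mul_y_mul_y, zero_add,
    mul_assoc]

theorem y_mul_y_mul_x_mul_y : 𝐲 * (𝐲 * (𝐱 * 𝐲)) = -(𝐲 * (𝐲 * 𝐲)) := by
  rw [← mul_assoc 𝐲 𝐱, ← mul_assoc, y_mul_y_mul_x, sub_mul, neg_mul, mul_assoc, x_mul_y_mul_y,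
    neg_zero, zero_sub, mul_assoc]

def word : Fin 8 → AlgA K := ![1, 𝐱, 𝐲, 𝐲 * 𝐱, 𝐱 * 𝐲, 𝐲 * 𝐲, 𝐲 * (𝐱 * 𝐲), 𝐲 * (𝐲 * 𝐲)]

def depth : Fin 8 → ℕ := ![0, 1, 1, 2, 3, 3, 4, 5]

local notation "F" => spanFiltration K (word K) depth

theorem word_mem (i : Fin 8) {k : ℕ} (h : k ≤ depth i) : word K i ∈ F k :=
  mem_spanFiltration K _ _ h

theorem x_mul_word_mem (i : Fin 8) : 𝐱 * word K i ∈ F (depth i + 1) := by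
  fin_cases i <;> simp only [word, depth, Fin.zero_eta, Fin.mk_one, Fin.isValue, Fin.reduceFinMk,
    Matrix.cons_val, Matrix.cons_val_zero, Matrix.cons_val_one, Nat.reduceAdd, zero_add, mul_one]
  · exact word_mem K 1 le_rfl
  · rw [x_mul_x]; exact zero_mem _
  · exact word_mem K 4 (by decide)
  · rw [x_mul_y_mul_x]; exact add_mem (word_mem K 4 le_rfl) (word_mem K 5 le_rfl)
  · rw [← mul_assoc 𝐱 𝐱, x_mul_x, zero_mul]; exact zero_mem _
  · rw [x_mul_y_mul_y]; exact zero_mem _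
  · rw [x_mul_y_mul_x_mul_y]; exact word_mem K 7 le_rfl
  · rw [x_mul_y_mul_y_mul]; exact zero_mem _

theorem y_mul_word_mem (i : Fin 8) : 𝐲 * word K i ∈ F (depth i + 1) := by
  fin_cases i <;> simp only [word, depth, Fin.zero_eta, Fin.mk_one, Fin.isValue, Fin.reduceFinMk,
    Matrix.cons_val, Matrix.cons_val_zero, Matrix.cons_val_one, Nat.reduceAdd, zero_add, mul_one]
  · exact word_mem K 2 le_rfl
  · exact word_mem K 3 le_rfl
  · exact word_mem K 5 (by decide)
  · rw [y_mul_y_mul_x]; exact sub_mem (neg_mem (word_mem K 4 le_rfl)) (word_mem K 5 le_rfl)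
  · exact word_mem K 6 le_rfl
  · exact word_mem K 7 (by decide)
  · rw [y_mul_y_mul_x_mul_y]; exact neg_mem (word_mem K 7 le_rfl)
  · rw [y_mul_y_mul_y_mul_y]; exact zero_mem _

theorem adjoin_x_y : Algebra.adjoin K {𝐱, 𝐲} = ⊤ := by
  have hxy : {𝐱, 𝐲} = mk K '' Set.range (FreeAlgebra.ι K) := by
    ext a
    simp [Fin.exists_fin_two, x, y, Xg, Yg, eq_comm]
  rw [hxy, ← AlgHom.map_adjoin, FreeAlgebra.adjoin_range_ι, Algebra.map_top,
    AlgHom.range_eq_top]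
  exact RingQuot.mkAlgHom_surjective K (ARel K)

def augmentation : AlgA K →ₐ[K] K :=
  RingQuot.liftAlgHom K ⟨FreeAlgebra.lift K 0, by rintro _ _ ⟨⟩ <;> simp [Xg, Yg]⟩

theorem augmentation_mk (f : FreeAlgebra K (Fin 2)) :
    augmentation K (mk K f) = FreeAlgebra.lift K 0 f :=
  RingQuot.liftAlgHom_mkAlgHom_apply _ _ _ _

theorem augmentation_x : augmentation K 𝐱 = 0 := by
  simp [x, augmentation_mk, Xg]

theorem augmentation_y : augmentation K 𝐲 = 0 := by
  simp [y, augmentation_mk, Yg]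

theorem spanFiltration_word_six_eq_bot : F 6 = ⊥ := by
  have hdepth : ∀ i, depth i < 6 := by decide
  rw [spanFiltration, Submodule.span_eq_bot]
  rintro _ ⟨i, hi, rfl⟩
  exact absurd hi (hdepth i).not_ge

theorem isNilpotent_of_augmentation_eq_zero {a : AlgA K} (ha : augmentation K a = 0) :
    IsNilpotent a := by
  let S := raisingSubalgebra F (spanFiltration_antitone K (word K) depth)
  have hgen : ∀ g ∈ ({𝐱, 𝐲} : Set (AlgA K)), g - algebraMap K _ (augmentation K g) ∈ S := by
    rintro _ (rfl | rfl)
    · simpa [augmentation_x] using mem_raisingSubalgebra_spanFiltration (x_mul_word_mem K)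
    · simpa [augmentation_y] using mem_raisingSubalgebra_spanFiltration (y_mul_word_mem K)
  have hS : a ∈ S := by
    simpa [ha] using sub_algebraMap_mem_of_adjoin_eq_top _ (adjoin_x_y K) hgen a
  exact ⟨6, pow_eq_zero_of_mem_raisingSubalgebra (word_mem K 0 le_rfl)
    (spanFiltration_word_six_eq_bot K) hS⟩

end AlgA

theorem stmt_3_general (K : Type u) [Field K] :
    (∃! I : Ideal (AlgA K)ᵐᵒᵖ, I.IsMaximal) ∧
    Nonempty ((jacRad K).ringCon.Quotient ≃ₐ[K] K) := by
  have hnil : ∀ a, AlgA.augmentation K a = 0 → IsNilpotent a :=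
    fun _ ↦ AlgA.isNilpotent_of_augmentation_eq_zero K
  refine ⟨existsUnique_isMaximal_mulOpposite hnil, ?_⟩
  rw [jacRad, TwoSidedIdeal.jacobson_bot_eq_ker hnil]
  exact ⟨TwoSidedIdeal.quotientKerAlgEquivOfSurjective fun k ↦ ⟨algebraMap K _ k, by simp⟩⟩

/-- The algebra `A = K⟨x,y⟩/(x², xy + y² + y²x)` over a field `K` of characteristic 0 is a
local ring (it has a unique maximal right ideal, i.e. a unique maximal left ideal of `Aᵐᵒᵖ`),
and its quotient by its Jacobson radical is isomorphic to `K` as a `K`-algebra. -/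
theorem stmt_3 (K : Type u) [Field K] [CharZero K] :
    (∃! I : Ideal (AlgA K)ᵐᵒᵖ, I.IsMaximal) ∧
    Nonempty ((jacRad K).ringCon.Quotient ≃ₐ[K] K) :=
  stmt_3_general K

end
end
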